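/- (Non-homogeneous dyadic Journé lemma) Let μ = μ_n × μ_m be an arbitrary product of Borel measures on ℝⁿ and ℝᵐ, D = D_n × D_m a product dyadic system, and Ω ⊂ ℝ^{n+m} a set with μ(Ω) < ∞ such that every x ∈ Ω lies in some R ∈ D with R ⊂ Ω. Let Ω̃ := {M χ_Ω > 1/2} with M the strong dyadic maximal operator, and for R ∈ D define emb₁(R;Ω) := sup{k : R^{(k,0)} ⊂ Ω̃}, where R^{(k,0)} := I^{(k)} × J for R = I × J. Call R = I × J ⊂ Ω 2-maximal if I × J̃ ⊄ Ω for every dyadic J̃ ⊋ J. Then for any decreasing ω: ℕ → ℝ₊ with Σ_{k≥0} ω(k) < ∞: Σ_{R ⊂ Ω, 2-maximal} ω(emb₁(R;Ω)) μ(R) ≤ 2 (Σ_{k=0}^∞ ω(k)) μ(Ω). -/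

import Mathlib

open MeasureTheory Set

/-- The standard dyadic cube of generation `k` (side length `2^{-k}`) at
position `j` in `ℝⁿ`: `∏_d [j_d 2^{-k}, (j_d+1) 2^{-k})`. -/
def dyCube (n : ℕ) (k : ℤ) (j : Fin n → ℤ) : Set (Fin n → ℝ) :=
  {x | ∀ d, (j d : ℝ) * (2 : ℝ) ^ (-k) ≤ x d ∧ x d < ((j d : ℝ) + 1) * (2 : ℝ) ^ (-k)}

/-- The position index of the `kk`-th dyadic ancestor `I^{(kk)}` of the cube at
position `j`. -/
def ancIdx {n : ℕ} (j : Fin n → ℤ) (kk : ℕ) : Fin n → ℤ := fun d => (j d).fdiv (2 ^ kk)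

/-- The dyadic rectangle `R = I × J` of a product dyadic system. -/
def dyRect (n m : ℕ) (k : ℤ) (j : Fin n → ℤ) (l : ℤ) (i : Fin m → ℤ) :
    Set ((Fin n → ℝ) × (Fin m → ℝ)) :=
  dyCube n k j ×ˢ dyCube m l i

/-- `R^{(kk,0)} = I^{(kk)} × J`: ancestor in the first parameter only. -/
def ancRect (n m : ℕ) (k : ℤ) (j : Fin n → ℤ) (l : ℤ) (i : Fin m → ℤ) (kk : ℕ) :
    Set ((Fin n → ℝ) × (Fin m → ℝ)) :=
  dyRect n m (k - kk) (ancIdx j kk) l i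

/-- The enlargement `Ω̃ = {Mχ_Ω > 1/2}`, where `M` is the strong dyadic maximal
operator over the dyadic rectangles: `x ∈ Ω̃` iff some dyadic rectangle `R ∋ x`
satisfies `μ(R) < 2 μ(R ∩ Ω)`. -/
def tildeSet {n m : ℕ} (μn : Measure (Fin n → ℝ)) (μm : Measure (Fin m → ℝ))
    (Ω : Set ((Fin n → ℝ) × (Fin m → ℝ))) : Set ((Fin n → ℝ) × (Fin m → ℝ)) :=
  {z | ∃ (k : ℤ) (j : Fin n → ℤ) (l : ℤ) (i : Fin m → ℤ),
    z ∈ dyRect n m k j l i ∧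
      μn.prod μm (dyRect n m k j l i) < 2 * μn.prod μm (dyRect n m k j l i ∩ Ω)}

/-- `R = I × J` is 2-maximal in `Ω`: `R ⊆ Ω` but `I × J̃ ⊄ Ω` for any dyadic
`J̃ ⊋ J`. -/
def TwoMaximal {n m : ℕ} (Ω : Set ((Fin n → ℝ) × (Fin m → ℝ)))
    (k : ℤ) (j : Fin n → ℤ) (l : ℤ) (i : Fin m → ℤ) : Prop :=
  dyRect n m k j l i ⊆ Ω ∧
    ∀ (l' : ℤ) (i' : Fin m → ℤ), dyCube m l i ⊂ dyCube m l' i' →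
      ¬ dyRect n m k j l' i' ⊆ Ω

/-!
Write `Δ k = ω k - ω (k + 1)`. Since `ω` decreases to `0`, `ω (emb₁ R)` is at most the sum of
`Δ k` over all `k` with `emb₁ R ≤ k`, i.e. with `R^{(k+1,0)} ⊄ Ω̃`. Exchanging the sums, it
suffices to show that for each `K` the 2-maximal `R` with `R^{(K+1,0)} ⊄ Ω̃` have total measure
at most `2 (K + 1) μ(Ω)`; then `∑ (K + 1) Δ K = ∑ ω` by Abel summation. Split these rectangles
into `K + 1` classes by their first generation mod `K + 1`. Within a class, let `E(R)` be `R`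
minus the class members with a longer first side: the `E(R)` are disjoint subsets of `Ω`, and
`μ(R) ≤ 2 μ(E(R))` because the part of `R` covered by longer members sits, after passing to
`I^{(K+1)} × J`, inside a part of `Ω` that fills at most half of `R^{(K+1,0)}`.
-/

open Filter Topology ENNReal

lemma mem_dyCube_iff {n : ℕ} {k : ℤ} {j : Fin n → ℤ} {x : Fin n → ℝ} :
    x ∈ dyCube n k j ↔ ∀ d, ⌊x d * 2 ^ k⌋ = j d := by
  have h2 : (0 : ℝ) < 2 ^ k := zpow_pos two_pos k
  refine forall_congr' fun d => ?_
  rw [Int.floor_eq_iff, zpow_neg, ← div_eq_mul_inv, ← div_eq_mul_inv, div_le_iff₀ h2,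
    lt_div_iff₀ h2]

lemma floor_mul_zpow_sub (r : ℝ) (k : ℤ) (M : ℕ) :
    ⌊r * 2 ^ (k - M)⌋ = ⌊r * 2 ^ k⌋.fdiv (2 ^ M) := by
  have h : r * (2 : ℝ) ^ (k - M) = r * 2 ^ k / ((2 ^ M : ℕ) : ℝ) := by
    rw [zpow_sub₀ two_ne_zero, zpow_natCast]; push_cast; ring
  rw [h, Int.floor_div_natCast, Int.fdiv_eq_ediv_of_nonneg _ (by positivity)]
  push_cast; rfl

lemma dyCube_subset_ancestor {n : ℕ} (k : ℤ) (j : Fin n → ℤ) (M : ℕ) :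
    dyCube n k j ⊆ dyCube n (k - M) (ancIdx j M) := fun x hx => by
  rw [mem_dyCube_iff] at hx ⊢
  exact fun d => by rw [floor_mul_zpow_sub, hx d]; rfl

lemma dyCube_subset_of_mem {n : ℕ} {k k' : ℤ} {j j' : Fin n → ℤ} {x : Fin n → ℝ}
    (h : k' ≤ k) (hx : x ∈ dyCube n k j) (hx' : x ∈ dyCube n k' j') :
    dyCube n k j ⊆ dyCube n k' j' := by
  obtain ⟨M, rfl⟩ : ∃ M : ℕ, k' = k - M := ⟨(k - k').toNat, by omega⟩
  intro y hy
  rw [mem_dyCube_iff] at hx hx' hy ⊢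
  intro d
  rw [floor_mul_zpow_sub, hy d, ← hx d, ← floor_mul_zpow_sub, hx' d]

lemma eq_of_mem_dyCube {n : ℕ} {k : ℤ} {j j' : Fin n → ℤ} {x : Fin n → ℝ}
    (hx : x ∈ dyCube n k j) (hx' : x ∈ dyCube n k j') : j = j' :=
  funext fun d => by rw [← mem_dyCube_iff.mp hx d, mem_dyCube_iff.mp hx' d]

/-- Shifting the lower corner of `dyCube m l' i'` by `2⁻ˡ` stays inside it, but leaves any
cube of generation `l` containing that corner. -/
lemma dyCube_ne_of_lt {m : ℕ} (hm : 0 < m) {l l' : ℤ} {i i' : Fin m → ℤ} (h : l' < l) :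
    dyCube m l i ≠ dyCube m l' i' := by
  intro heq
  have hs : (0 : ℝ) < 2 ^ (-l) := zpow_pos two_pos _
  have hs' : (2 : ℝ) ^ (-l) < 2 ^ (-l') := zpow_lt_zpow_right₀ one_lt_two (by omega)
  let c : Fin m → ℝ := fun d => i' d * 2 ^ (-l')
  have hc : c ∈ dyCube m l i := heq ▸ fun d => ⟨le_rfl, by simp only [c]; nlinarith⟩
  have hy : (fun d => c d + 2 ^ (-l)) ∈ dyCube m l i :=
    heq ▸ fun d => ⟨by simp only [c]; linarith, by simp only [c]; nlinarith⟩
  have := (hc ⟨0, hm⟩).1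
  have := (hy ⟨0, hm⟩).2
  linarith

lemma measurableSet_dyCube {n : ℕ} (k : ℤ) (j : Fin n → ℤ) : MeasurableSet (dyCube n k j) := by
  have : dyCube n k j = Set.pi univ fun d => Ico ((j d : ℝ) * 2 ^ (-k)) ((j d + 1) * 2 ^ (-k)) := by
    ext x; simp [dyCube, Set.mem_pi]
  exact this ▸ MeasurableSet.univ_pi fun _ => measurableSet_Ico

section Weights

variable {ω : ℕ → ℝ}

lemma hasSum_ite_sub_succ (hω : Antitone ω) (hω0 : Tendsto ω atTop (𝓝 0)) (t : ℕ) :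
    HasSum (fun k => if t ≤ k then ω k - ω (k + 1) else 0) (ω t) := by
  rw [← hasSum_nat_add_iff' t, Finset.sum_eq_zero fun k hk => if_neg (by simpa using hk),
    sub_zero]
  simp only [le_add_iff_nonneg_left, zero_le, if_true]
  refine (hasSum_iff_tendsto_nat_of_nonneg (fun k => sub_nonneg.2 (hω (by omega))) _).2 ?_
  have hsum : ∀ N, ∑ k ∈ Finset.range N, (ω (k + t) - ω (k + t + 1)) = ω t - ω (N + t) := by
    intro N
    simpa [Nat.add_right_comm] using Finset.sum_range_sub' (fun k => ω (k + t)) N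
  simpa [hsum] using tendsto_const_nhds.sub (hω0.comp (tendsto_add_atTop_nat t))

lemma ofReal_eq_tsum_ite_sub_succ (hω : Antitone ω) (hω0 : Tendsto ω atTop (𝓝 0)) (t : ℕ) :
    ENNReal.ofReal (ω t) = ∑' k, if t ≤ k then ENNReal.ofReal (ω k - ω (k + 1)) else 0 := by
  have h := hasSum_ite_sub_succ hω hω0 t
  rw [← h.tsum_eq, ENNReal.ofReal_tsum_of_nonneg _ h.summable]
  · exact tsum_congr fun k => by split_ifs <;> simp
  · intro k; split_ifs
    · exact sub_nonneg.2 (hω k.le_succ)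
    · exact le_rfl

lemma tsum_succ_mul_ofReal_sub_succ (hω : Antitone ω) (hpos : ∀ k, 0 ≤ ω k) (hsum : Summable ω) :
    ∑' k : ℕ, ((k : ℝ≥0∞) + 1) * ENNReal.ofReal (ω k - ω (k + 1)) = ENNReal.ofReal (∑' k, ω k) := by
  rw [ENNReal.ofReal_tsum_of_nonneg hpos hsum]
  simp_rw [ofReal_eq_tsum_ite_sub_succ hω hsum.tendsto_atTop_zero]
  rw [ENNReal.tsum_comm]
  refine tsum_congr fun k => ?_
  rw [tsum_eq_sum (s := Finset.range (k + 1)) fun t ht => if_neg (by simpa using ht),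
    Finset.sum_ite_of_true fun t ht => by simpa [Nat.lt_succ_iff] using ht]
  simp

/-- If `k₀` is the largest index with `P k₀`, then `ω k₀` is the tail of the telescoping
series from `k₀` on, and every `k ≥ k₀` has `¬ P (k + 1)`. -/
lemma ofReal_iInf_le_tsum (hω : Antitone ω) (hpos : ∀ k, 0 ≤ ω k)
    (hω0 : Tendsto ω atTop (𝓝 0)) (P : ℕ → Prop) :
    ENNReal.ofReal (⨅ k : {k // P k}, ω k) ≤
      ∑' k, {k | ¬ P (k + 1)}.indicator (fun k => ENNReal.ofReal (ω k - ω (k + 1))) k := by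
  have hbdd : BddBelow (range fun k : {k // P k} => ω k) := ⟨0, by rintro _ ⟨k, rfl⟩; exact hpos k⟩
  rcases isEmpty_or_nonempty {k // P k} with hP | ⟨⟨k₀, hk₀⟩⟩
  · simp
  by_cases hb : BddAbove {k | P k}
  · have hmax : P (sSup {k | P k}) := Nat.sSup_mem ⟨k₀, hk₀⟩ hb
    calc ENNReal.ofReal (⨅ k : {k // P k}, ω k)
        ≤ ENNReal.ofReal (ω (sSup {k | P k})) :=
          ENNReal.ofReal_le_ofReal (ciInf_le hbdd ⟨_, hmax⟩)
      _ ≤ _ := by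
          rw [ofReal_eq_tsum_ite_sub_succ hω hω0]
          refine ENNReal.tsum_le_tsum fun k => ?_
          split_ifs with hk
          · have : ¬ P (k + 1) := fun hk' => (le_csSup hb hk').not_gt (by omega)
            rw [indicator_of_mem this]
          · exact zero_le
  · have hle : ∀ N, ⨅ k : {k // P k}, ω k ≤ ω N := fun N => by
      obtain ⟨k, hk, hNk⟩ := not_bddAbove_iff.1 hb N
      exact (ciInf_le hbdd ⟨k, hk⟩).trans (hω hNk.le)
    simp [ENNReal.ofReal_eq_zero.2 (ge_of_tendsto' hω0 hle)]

end Weights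

lemma le_two_mul_of_le_add {x e y : ℝ≥0∞} (h : x ≤ e + y) (hy : 2 * y ≤ x) (hx : x ≠ ⊤) :
    x ≤ 2 * e := by
  refine ENNReal.le_of_add_le_add_right hx ?_
  calc x + x = 2 * x := (two_mul x).symm
    _ ≤ 2 * (e + y) := by gcongr
    _ = 2 * e + 2 * y := mul_add _ _ _
    _ ≤ 2 * e + x := by gcongr

/-- If at most half of `A ×ˢ J` lies in `Ω` while `A ×ˢ B ⊆ Ω`, then `B` fills at most half
of `J`, hence `I ×ˢ B` fills at most half of `I ×ˢ J`. -/
lemma two_mul_prod_le_of_sparse {X Y : Type*} [MeasurableSpace X] [MeasurableSpace Y]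
    {μ : Measure X} {ν : Measure Y} [SFinite ν] {I A : Set X} {B J : Set Y}
    {Ω : Set (X × Y)} (hIA : I ⊆ A) (hBJ : B ⊆ J) (hAB : A ×ˢ B ⊆ Ω)
    (hΩ : μ.prod ν Ω ≠ ⊤) (hsparse : 2 * μ.prod ν (A ×ˢ J ∩ Ω) ≤ μ.prod ν (A ×ˢ J)) :
    2 * μ.prod ν (I ×ˢ B) ≤ μ.prod ν (I ×ˢ J) := by
  have hfin : μ A * ν B ≠ ⊤ := by
    rw [← Measure.prod_prod]; exact ne_top_of_le_ne_top hΩ (measure_mono hAB)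
  have hA : 2 * (μ A * ν B) ≤ μ A * ν J := by
    rw [← Measure.prod_prod, ← Measure.prod_prod]
    exact le_trans (by gcongr; exact subset_inter (prod_mono le_rfl hBJ) hAB) hsparse
  rw [Measure.prod_prod, Measure.prod_prod]
  rcases eq_or_ne (μ A) 0 with h0 | h0
  · simp [measure_mono_null hIA h0]
  rcases eq_or_ne (μ A) ⊤ with htop | htop
  · have hB0 : ν B = 0 := by
      by_contra hB0
      exact hfin (by rw [htop, ENNReal.top_mul hB0])
    simp [hB0]
  have hB : 2 * ν B ≤ ν J := (ENNReal.mul_le_mul_iff_right h0 htop).1 (by rwa [mul_left_comm])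
  calc 2 * (μ I * ν B) = μ I * (2 * ν B) := mul_left_comm _ _ _
    _ ≤ μ I * ν J := by gcongr

/-- Index `((k, j), (l, i))` of the dyadic rectangle `dyRect n m k j l i`. -/
abbrev RectIdx (n m : ℕ) : Type := (ℤ × (Fin n → ℤ)) × (ℤ × (Fin m → ℤ))

abbrev RectIdx.rect {n m : ℕ} (R : RectIdx n m) : Set ((Fin n → ℝ) × (Fin m → ℝ)) :=
  dyRect n m R.1.1 R.1.2 R.2.1 R.2.2

section Journe

variable {n m : ℕ} {μn : Measure (Fin n → ℝ)} {μm : Measure (Fin m → ℝ)}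
  {Ω : Set ((Fin n → ℝ) × (Fin m → ℝ))}

/-- The rectangles `R` with `emb₁(R; Ω) < K`. -/
def lowEmb (μn : Measure (Fin n → ℝ)) (μm : Measure (Fin m → ℝ))
    (Ω : Set ((Fin n → ℝ) × (Fin m → ℝ))) (K : ℕ) : Set (RectIdx n m) :=
  {R | ¬ ancRect n m R.1.1 R.1.2 R.2.1 R.2.2 K ⊆ tildeSet μn μm Ω}

lemma measurableSet_rect (R : RectIdx n m) : MeasurableSet R.rect :=
  (measurableSet_dyCube _ _).prod (measurableSet_dyCube _ _)

lemma two_mul_measure_inter_le_of_not_subset_tildeSet {k l : ℤ} {j : Fin n → ℤ}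
    {i : Fin m → ℤ} (h : ¬ dyRect n m k j l i ⊆ tildeSet μn μm Ω) :
    2 * μn.prod μm (dyRect n m k j l i ∩ Ω) ≤ μn.prod μm (dyRect n m k j l i) := by
  obtain ⟨z, hz, hz'⟩ := not_subset.1 h
  exact not_lt.1 fun hlt => hz' ⟨k, j, l, i, hz, hlt⟩

lemma TwoMaximal.le_of_mem (hm : 0 < m) {k k' l l' : ℤ} {j j' : Fin n → ℤ}
    {i i' : Fin m → ℤ} {x : (Fin n → ℝ) × (Fin m → ℝ)} (hR : TwoMaximal Ω k j l i)
    (hS : dyRect n m k' j' l' i' ⊆ Ω) (hk : k' ≤ k) (hx : x ∈ dyRect n m k j l i)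
    (hx' : x ∈ dyRect n m k' j' l' i') : l ≤ l' := by
  by_contra! hl
  have hJ := dyCube_subset_of_mem hl.le hx.2 hx'.2
  have hI := dyCube_subset_of_mem hk hx.1 hx'.1
  exact hR.2 l' i' (hJ.ssubset_of_ne (dyCube_ne_of_lt hm hl)) fun z hz => hS ⟨hI hz.1, hz.2⟩

lemma TwoMaximal.eq_of_mem (hm : 0 < m) {k l l' : ℤ} {j j' : Fin n → ℤ} {i i' : Fin m → ℤ}
    {x : (Fin n → ℝ) × (Fin m → ℝ)} (hR : TwoMaximal Ω k j l i) (hS : TwoMaximal Ω k j' l' i')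
    (hx : x ∈ dyRect n m k j l i) (hx' : x ∈ dyRect n m k j' l' i') :
    j = j' ∧ l = l' ∧ i = i' := by
  obtain rfl : l = l' := le_antisymm (hR.le_of_mem hm hS.1 le_rfl hx hx')
    (hS.le_of_mem hm hR.1 le_rfl hx' hx)
  exact ⟨eq_of_mem_dyCube hx.1 hx'.1, rfl, eq_of_mem_dyCube hx.2 hx'.2⟩

/-- The set `E(R)` of the paper. -/
def uncoveredPart (C : Set (RectIdx n m)) (R : RectIdx n m) : Set ((Fin n → ℝ) × (Fin m → ℝ)) :=
  R.rect \ ⋃ S ∈ C, ⋃ (_ : S.1.1 < R.1.1), S.rect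

lemma measurableSet_uncoveredPart (C : Set (RectIdx n m)) (R : RectIdx n m) :
    MeasurableSet (uncoveredPart C R) :=
  (measurableSet_rect R).diff <|
    .biUnion C.to_countable fun S _ => .iUnion fun _ => measurableSet_rect S

lemma pairwiseDisjoint_uncoveredPart (hm : 0 < m) {C : Set (RectIdx n m)}
    (hC : ∀ R ∈ C, TwoMaximal Ω R.1.1 R.1.2 R.2.1 R.2.2) :
    C.PairwiseDisjoint (uncoveredPart C) := by
  have key : ∀ R ∈ C, ∀ S ∈ C, ∀ x ∈ uncoveredPart C R, x ∈ uncoveredPart C S →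
      R.1.1 ≤ S.1.1 := fun R hR S hS x hxR hxS =>
    not_lt.1 fun h => hxR.2 (mem_biUnion hS (mem_iUnion.2 ⟨h, hxS.1⟩))
  rintro ⟨⟨k, j⟩, l, i⟩ hR ⟨⟨k', j'⟩, l', i'⟩ hS hne
  refine disjoint_left.2 fun x hxR hxS => hne ?_
  obtain rfl : k = k' := le_antisymm (key _ hR _ hS x hxR hxS) (key _ hS _ hR x hxS hxR)
  obtain ⟨hj, hl, hi⟩ := (hC _ hR).eq_of_mem hm (hC ((k, j'), l', i') hS) hxR.1 hxS.1
  simp only at hj hl hi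
  subst hj hl hi
  rfl

variable [SFinite μm]

/-- Members of `C` with a longer first side that meet `R` have their first side containing
`I^{(K+1)}` (the generations are `K + 1` apart) and their second side inside `J`
(2-maximality of `R`), so over `I^{(K+1)}` they cover a set `A ×ˢ B ⊆ Ω`. Since
`emb₁(R) ≤ K`, `Ω` fills at most half of `I^{(K+1)} × J`, so `B` fills at most half of `J`. -/
lemma measure_rect_le_two_mul_uncoveredPart (hm : 0 < m) (hΩ : μn.prod μm Ω ≠ ⊤) {K : ℕ}
    {C : Set (RectIdx n m)} (hC : ∀ R ∈ C, TwoMaximal Ω R.1.1 R.1.2 R.2.1 R.2.2)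
    (hlow : C ⊆ lowEmb μn μm Ω (K + 1))
    (hgap : ∀ R ∈ C, ∀ S ∈ C, S.1.1 < R.1.1 → S.1.1 + (K + 1) ≤ R.1.1)
    {R : RectIdx n m} (hR : R ∈ C) :
    μn.prod μm R.rect ≤ 2 * μn.prod μm (uncoveredPart C R) := by
  obtain ⟨⟨k, j⟩, l, i⟩ := R
  set A := dyCube n (k - (K + 1 : ℕ)) (ancIdx j (K + 1))
  set B : Set (Fin m → ℝ) := {y | ∃ S ∈ C, S.1.1 < k ∧
    (S.rect ∩ dyRect n m k j l i).Nonempty ∧ y ∈ dyCube m S.2.1 S.2.2}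
  have hB : ∀ y ∈ B, y ∈ dyCube m l i ∧
      ∃ S ∈ C, A ⊆ dyCube n S.1.1 S.1.2 ∧ y ∈ dyCube m S.2.1 S.2.2 := by
    rintro y ⟨S, hS, hlt, ⟨x, hxS, hxR⟩, hy⟩
    have hl : l ≤ S.2.1 := (hC _ hR).le_of_mem hm (hC S hS).1 hlt.le hxR hxS
    have hk : S.1.1 ≤ k - (K + 1 : ℕ) := by
      have := hgap _ hR S hS hlt
      simp only at this
      omega
    exact ⟨dyCube_subset_of_mem hl hxS.2 hxR.2 hy, S, hS,
      dyCube_subset_of_mem hk (dyCube_subset_ancestor k j _ hxR.1) hxS.1, hy⟩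
  have hAB : A ×ˢ B ⊆ Ω := by
    rintro ⟨u, v⟩ ⟨hu, hv⟩
    obtain ⟨-, S, hS, hAS, hvS⟩ := hB v hv
    exact (hC S hS).1 ⟨hAS hu, hvS⟩
  have hcover : dyRect n m k j l i ⊆ uncoveredPart C ((k, j), (l, i)) ∪ dyCube n k j ×ˢ B := by
    intro x hx
    by_cases hxU : x ∈ uncoveredPart C ((k, j), (l, i))
    · exact Or.inl hxU
    simp only [uncoveredPart, Set.mem_sdiff, hx, true_and, not_not, mem_iUnion] at hxU
    obtain ⟨S, hS, hlt, hxS⟩ := hxU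
    exact Or.inr ⟨hx.1, S, hS, hlt, ⟨x, hxS, hx⟩, hxS.2⟩
  have hhalf : 2 * μn.prod μm (dyCube n k j ×ˢ B) ≤ μn.prod μm (dyRect n m k j l i) :=
    two_mul_prod_le_of_sparse (dyCube_subset_ancestor k j _) (fun y hy => (hB y hy).1) hAB hΩ
      (two_mul_measure_inter_le_of_not_subset_tildeSet (hlow hR))
  exact le_two_mul_of_le_add ((measure_mono hcover).trans (measure_union_le _ _)) hhalf
    (ne_top_of_le_ne_top hΩ (measure_mono (hC _ hR).1))

lemma tsum_measure_rect_le_of_gap (hm : 0 < m) (hΩ : μn.prod μm Ω ≠ ⊤) {K : ℕ}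
    {C : Set (RectIdx n m)} (hC : ∀ R ∈ C, TwoMaximal Ω R.1.1 R.1.2 R.2.1 R.2.2)
    (hlow : C ⊆ lowEmb μn μm Ω (K + 1))
    (hgap : ∀ R ∈ C, ∀ S ∈ C, S.1.1 < R.1.1 → S.1.1 + (K + 1) ≤ R.1.1) :
    ∑' R : C, μn.prod μm R.1.rect ≤ 2 * μn.prod μm Ω :=
  calc ∑' R : C, μn.prod μm R.1.rect
      ≤ ∑' R : C, 2 * μn.prod μm (uncoveredPart C R) := ENNReal.tsum_le_tsum fun R =>
        measure_rect_le_two_mul_uncoveredPart hm hΩ hC hlow hgap R.2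
    _ = 2 * μn.prod μm (⋃ R ∈ C, uncoveredPart C R) := by
        rw [ENNReal.tsum_mul_left, measure_biUnion C.to_countable
          (pairwiseDisjoint_uncoveredPart hm hC) fun R _ => measurableSet_uncoveredPart C R]
    _ ≤ 2 * μn.prod μm Ω := by
        gcongr
        exact iUnion₂_subset fun R hR => sdiff_subset.trans (hC R hR).1

/-- Split by the residue of the first generation mod `K + 1`; each class is `(K + 1)`-separated. -/
lemma tsum_twoMaximal_lowEmb_le (hm : 0 < m) (hΩ : μn.prod μm Ω ≠ ⊤) (K : ℕ) :
    ∑' R : {R : RectIdx n m // TwoMaximal Ω R.1.1 R.1.2 R.2.1 R.2.2},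
      (lowEmb μn μm Ω (K + 1)).indicator (fun R => μn.prod μm R.rect) R
      ≤ 2 * (K + 1) * μn.prod μm Ω := by
  set T : Set (RectIdx n m) := {R | TwoMaximal Ω R.1.1 R.1.2 R.2.1 R.2.2}
  set C : ZMod (K + 1) → Set (RectIdx n m) := fun r =>
    T ∩ lowEmb μn μm Ω (K + 1) ∩ {R | (R.1.1 : ZMod (K + 1)) = r}
  have hgap : ∀ r, ∀ R ∈ C r, ∀ S ∈ C r, S.1.1 < R.1.1 → S.1.1 + (K + 1) ≤ R.1.1 := by
    rintro r R ⟨-, hR⟩ S ⟨-, hS⟩ hlt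
    have hdvd := (ZMod.intCast_eq_intCast_iff_dvd_sub S.1.1 R.1.1 (K + 1)).1 (hS.trans hR.symm)
    have := Int.le_of_dvd (by omega) hdvd
    push_cast at this
    omega
  calc ∑' R : T, (lowEmb μn μm Ω (K + 1)).indicator (fun R => μn.prod μm R.rect) R
      = ∑' R : ↥(T ∩ lowEmb μn μm Ω (K + 1)), μn.prod μm R.1.rect := by
        rw [tsum_subtype T, tsum_subtype (T ∩ _) fun R => μn.prod μm R.rect, indicator_indicator]
    _ ≤ ∑' R : ↥(⋃ r, C r), μn.prod μm R.1.rect :=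
        ENNReal.tsum_mono_subtype (fun R : RectIdx n m => μn.prod μm R.rect) fun R hR =>
          mem_iUnion_of_mem (R.1.1 : ZMod (K + 1)) ⟨hR, rfl⟩
    _ ≤ ∑ r, ∑' R : C r, μn.prod μm R.1.rect :=
        ENNReal.tsum_iUnion_le (fun R => μn.prod μm R.rect) C
    _ ≤ ∑ _r : ZMod (K + 1), 2 * μn.prod μm Ω := Finset.sum_le_sum fun r _ =>
        tsum_measure_rect_le_of_gap hm hΩ (fun R hR => hR.1.1) (fun R hR => hR.1.2) (hgap r)
    _ = 2 * (K + 1) * μn.prod μm Ω := by simp [ZMod.card]; ring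

end Journe

theorem stmt12_general {n m : ℕ} (hm : 0 < m)
    (μn : Measure (Fin n → ℝ)) (μm : Measure (Fin m → ℝ)) [SFinite μm]
    (Ω : Set ((Fin n → ℝ) × (Fin m → ℝ)))
    (hΩfin : μn.prod μm Ω < ⊤)
    (ω : ℕ → ℝ) (hωpos : ∀ k, 0 ≤ ω k) (hωdec : ∀ k l, k ≤ l → ω l ≤ ω k)
    (hωsum : Summable ω) :
    (∑' R : {R : (ℤ × (Fin n → ℤ)) × (ℤ × (Fin m → ℤ)) //
        TwoMaximal Ω R.1.1 R.1.2 R.2.1 R.2.2},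
      ENNReal.ofReal
          (⨅ kk : {kk : ℕ //
              ancRect n m R.1.1.1 R.1.1.2 R.1.2.1 R.1.2.2 kk ⊆ tildeSet μn μm Ω},
            ω kk.1) *
        μn.prod μm (dyRect n m R.1.1.1 R.1.1.2 R.1.2.1 R.1.2.2)) ≤
      2 * ENNReal.ofReal (∑' k, ω k) * μn.prod μm Ω := by
  set Δ : ℕ → ℝ≥0∞ := fun k => ENNReal.ofReal (ω k - ω (k + 1))
  calc _ ≤ ∑' R : {R : RectIdx n m // TwoMaximal Ω R.1.1 R.1.2 R.2.1 R.2.2}, ∑' k,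
          Δ k * (lowEmb μn μm Ω (k + 1)).indicator (fun R => μn.prod μm R.rect) R.1 := by
        refine ENNReal.tsum_le_tsum fun R => ?_
        refine (mul_le_mul_left (ofReal_iInf_le_tsum hωdec hωpos hωsum.tendsto_atTop_zero _)
          _).trans (ENNReal.tsum_mul_right.symm.trans_le (ENNReal.tsum_le_tsum fun k => ?_))
        unfold indicator lowEmb
        split_ifs <;> simp_all [Δ]
    _ = ∑' k, Δ k * ∑' R : {R : RectIdx n m // TwoMaximal Ω R.1.1 R.1.2 R.2.1 R.2.2},
          (lowEmb μn μm Ω (k + 1)).indicator (fun R => μn.prod μm R.rect) R.1 := by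
        rw [ENNReal.tsum_comm]
        simp_rw [ENNReal.tsum_mul_left]
    _ ≤ ∑' k : ℕ, Δ k * (2 * (k + 1) * μn.prod μm Ω) := by
        gcongr with k
        exact tsum_twoMaximal_lowEmb_le hm hΩfin.ne k
    _ = 2 * μn.prod μm Ω * ∑' k : ℕ, ((k : ℝ≥0∞) + 1) * Δ k := by
        rw [← ENNReal.tsum_mul_left]
        exact tsum_congr fun k => by ring
    _ = 2 * ENNReal.ofReal (∑' k, ω k) * μn.prod μm Ω := by
        rw [tsum_succ_mul_ofReal_sub_succ hωdec hωpos hωsum]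
        ring

/-- non-homogeneous dyadic Journé lemma. Let `μ = μ_n × μ_m`
be an arbitrary product of Borel measures, `Ω` a set of finite measure which is
a union of dyadic rectangles (every point of `Ω` lies in a rectangle inside
`Ω`), and `ω : ℕ → ℝ₊` decreasing with `Σ ω(k) < ∞`. Then
`Σ_{R ⊆ Ω 2-maximal} ω(emb₁(R;Ω)) μ(R) ≤ 2 (Σ_k ω(k)) μ(Ω)`, where
`emb₁(R;Ω) = sup{kk : R^{(kk,0)} ⊆ Ω̃}`; since `ω` is decreasing and the set
`{kk : R^{(kk,0)} ⊆ Ω̃}` is an initial segment of `ℕ`, the value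
`ω(emb₁(R;Ω))` is expressed as `⨅_{kk : R^{(kk,0)} ⊆ Ω̃} ω(kk)`. -/
theorem stmt12 {n m : ℕ} (hn : 0 < n) (hm : 0 < m)
    (μn : Measure (Fin n → ℝ)) (μm : Measure (Fin m → ℝ)) [SFinite μn] [SFinite μm]
    (Ω : Set ((Fin n → ℝ) × (Fin m → ℝ)))
    (hΩfin : μn.prod μm Ω < ⊤)
    (hΩcov : ∀ x ∈ Ω, ∃ (k : ℤ) (j : Fin n → ℤ) (l : ℤ) (i : Fin m → ℤ),
      x ∈ dyRect n m k j l i ∧ dyRect n m k j l i ⊆ Ω)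
    (ω : ℕ → ℝ) (hωpos : ∀ k, 0 ≤ ω k) (hωdec : ∀ k l, k ≤ l → ω l ≤ ω k)
    (hωsum : Summable ω) :
    (∑' R : {R : (ℤ × (Fin n → ℤ)) × (ℤ × (Fin m → ℤ)) //
        TwoMaximal Ω R.1.1 R.1.2 R.2.1 R.2.2},
      ENNReal.ofReal
          (⨅ kk : {kk : ℕ //
              ancRect n m R.1.1.1 R.1.1.2 R.1.2.1 R.1.2.2 kk ⊆ tildeSet μn μm Ω},
            ω kk.1) *
        μn.prod μm (dyRect n m R.1.1.1 R.1.1.2 R.1.2.1 R.1.2.2)) ≤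
      2 * ENNReal.ofReal (∑' k, ω k) * μn.prod μm Ω :=
  stmt12_general hm μn μm Ω hΩfin ω hωpos hωdec hωsum
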